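/- arXiv:2210.13530 — 2 statements merged into one kernel-verified Lean document; each statement's English description precedes it below -/
import Mathlib

section
/- Let c, p ∈ [0,∞), d ∈ ℕ, α, T ∈ (0,∞), and let G ∈ C([0,T]×ℝ^d, ℝ) be at most polynomially growing and satisfy |G(t,x) − G(s,x)| ≤ c (1 + ‖x‖_{ℝ^d})^p |t − s|^α for all s, t ∈ [0,T] and x ∈ ℝ^d. For n ∈ ℕ define G_n ∈ C([0,T]×ℝ^d, ℝ) by G_n(t,x) = (n/(2π))^{1/2} ∫_{−∞}^{∞} G(min{T, max{s,0}}, x) exp(−(n/2)(t−s)²) ds. Then limsup_{n→∞} sup_{t∈[0,T]} sup_{x∈ℝ^d} |G_n(t,x) − G(t,x)| / (1 + ‖x‖_{ℝ^d})^p = 0. -/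
open MeasureTheory Set Filter

noncomputable section

private lemma aux_integrable (b α : ℝ) (hb : 0 < b) (hα : 0 < α) :
    Integrable (fun u : ℝ => |u| ^ α * Real.exp (-b * u ^ 2)) := by
  set f : ℝ → ℝ := fun u => |u| ^ α * Real.exp (-b * u ^ 2) with hf
  have h1 : IntegrableOn f (Ioi 0) :=
    (integrableOn_rpow_mul_exp_neg_mul_sq hb (by linarith : (-1:ℝ) < α)).congr_fun
      (fun u hu => by simp [hf, abs_of_pos (mem_Ioi.mp hu)]) measurableSet_Ioi
  have hneg : MeasurePreserving (fun u : ℝ => -u) (volume : Measure ℝ) volume :=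
    Measure.measurePreserving_neg _
  have h2 : IntegrableOn f (Iio 0) := by
    have h3 : IntegrableOn (f ∘ (fun u : ℝ => -u)) ((fun u : ℝ => -u) ⁻¹' (Ioi 0)) :=
      (hneg.integrableOn_comp_preimage (Homeomorph.neg ℝ).measurableEmbedding).2 h1
    have h4 : (f ∘ (fun u : ℝ => -u)) = f := by
      funext u; simp [hf, Function.comp, neg_sq, abs_neg]
    have h5 : ((fun u : ℝ => -u) ⁻¹' (Ioi 0)) = Iio 0 := by ext u; simp
    rwa [h4, h5] at h3
  rw [← integrableOn_univ, ← Iio_union_Ici (a := (0:ℝ)), integrableOn_union,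
    integrableOn_Ici_iff_integrableOn_Ioi]
  exact ⟨h2, h1⟩


/-- Mollification in time of a function `G` that is at most polynomially
growing and Hölder continuous in time (uniformly in `x` up to the weight `(1+‖x‖)^p`)
converges to `G` uniformly in `t ∈ [0,T]` and `x ∈ ℝ^d` after division by `(1+‖x‖)^p`. -/
theorem stmt_0
    (c p : ℝ) (hc : 0 ≤ c) (hp : 0 ≤ p)
    (d : ℕ) (hd : 0 < d) (α T : ℝ) (hα : 0 < α) (hT : 0 < T)
    (G : ℝ → EuclideanSpace ℝ (Fin d) → ℝ)
    (hGcont : ContinuousOn (fun q : ℝ × EuclideanSpace ℝ (Fin d) => G q.1 q.2)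
      (Set.Icc 0 T ×ˢ Set.univ))
    (hGpoly : ∃ C q : ℝ, 0 ≤ C ∧ 0 ≤ q ∧
      ∀ t ∈ Set.Icc (0:ℝ) T, ∀ x : EuclideanSpace ℝ (Fin d), |G t x| ≤ C * (1 + ‖x‖) ^ q)
    (hGhold : ∀ s ∈ Set.Icc (0:ℝ) T, ∀ t ∈ Set.Icc (0:ℝ) T,
      ∀ x : EuclideanSpace ℝ (Fin d), |G t x - G s x| ≤ c * (1 + ‖x‖) ^ p * |t - s| ^ α)
    (Gn : ℕ → ℝ → EuclideanSpace ℝ (Fin d) → ℝ)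
    (hGn : ∀ (n : ℕ) (t : ℝ) (x : EuclideanSpace ℝ (Fin d)),
      Gn n t x = Real.sqrt ((n : ℝ) / (2 * Real.pi)) *
        ∫ s : ℝ, G (min T (max s 0)) x * Real.exp (-((n : ℝ) / 2) * (t - s) ^ 2)) :
    Tendsto (fun n : ℕ =>
        ⨆ (t : Set.Icc (0:ℝ) T) (x : EuclideanSpace ℝ (Fin d)),
          |Gn n (t : ℝ) x - G (t : ℝ) x| / (1 + ‖x‖) ^ p)
      atTop (nhds 0) := by
  obtain ⟨C, q, hC, hq, hpoly⟩ := hGpoly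
  set M : ℝ := ∫ u : ℝ, |u| ^ α * Real.exp (-(1/2 : ℝ) * u ^ 2) with hM
  set B : ℕ → ℝ := fun n => c / Real.sqrt (2 * Real.pi) * M * Real.sqrt (n : ℝ) ^ (-α)
    with hB
  -- the clamp map
  set cl : ℝ → ℝ := fun s => min T (max s 0) with hcl
  have hclmem : ∀ s, cl s ∈ Set.Icc (0:ℝ) T := fun s =>
    ⟨le_min hT.le (le_max_right _ _), min_le_left _ _⟩
  have hcllip : ∀ t ∈ Set.Icc (0:ℝ) T, ∀ s, |t - cl s| ≤ |t - s| := by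
    intro t ht s
    have h1 : cl t = t := by
      show min T (max t 0) = t
      rw [max_eq_left ht.1, min_eq_right ht.2]
    calc |t - cl s| = |cl t - cl s| := by rw [h1]
      _ ≤ max |T - T| |max t 0 - max s 0| := abs_min_sub_min_le_max T (max t 0) T (max s 0)
      _ = |max t 0 - max s 0| := by
          rw [sub_self, abs_zero]; exact max_eq_right (abs_nonneg _)
      _ ≤ |t - s| := abs_max_sub_max_le_abs t s 0
  -- main bound for n ≥ 1
  have key : ∀ n : ℕ, 1 ≤ n → ∀ t ∈ Set.Icc (0:ℝ) T, ∀ x : EuclideanSpace ℝ (Fin d),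
      |Gn n t x - G t x| / (1 + ‖x‖) ^ p ≤ B n := by
    intro n hn t ht x
    have hn0 : (0:ℝ) < (n:ℝ) := by exact_mod_cast hn
    set b : ℝ := (n : ℝ) / 2 with hb
    have hbpos : 0 < b := by positivity
    set w : ℝ := (1 + ‖x‖) ^ p with hw
    have hw1 : (1:ℝ) ≤ w := Real.one_le_rpow (by simp [norm_nonneg]) hp
    have hwpos : 0 < w := lt_of_lt_of_le one_pos hw1
    set φ : ℝ → ℝ := fun s => Real.exp (-b * (t - s) ^ 2) with hφ
    have hφint : Integrable φ := by
      have := (integrable_exp_neg_mul_sq hbpos).comp_sub_left t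
      simpa [hφ] using this
    have hφnn : ∀ s, 0 ≤ φ s := fun s => (Real.exp_pos _).le
    have hφi : ∫ s, φ s = Real.sqrt (Real.pi / b) := by
      rw [hφ]
      rw [integral_sub_left_eq_self (fun u : ℝ => Real.exp (-b * u ^ 2)) volume t]
      exact integral_gaussian b
    set A : ℝ := Real.sqrt ((n : ℝ) / (2 * Real.pi)) with hA
    have hAnn : 0 ≤ A := Real.sqrt_nonneg _
    have hone : A * ∫ s, φ s = 1 := by
      rw [hφi, hA, ← Real.sqrt_mul (by positivity)]
      rw [show (n : ℝ) / (2 * Real.pi) * (Real.pi / b) = 1 by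
        rw [hb]; field_simp]
      exact Real.sqrt_one
    -- continuity and boundedness of s ↦ G (cl s) x
    have hcont : Continuous (fun s : ℝ => G (cl s) x) := by
      have h1 : Continuous (fun s : ℝ => ((cl s, x) : ℝ × EuclideanSpace ℝ (Fin d))) :=
        ((continuous_const.min ((continuous_id.max continuous_const))).prodMk
          continuous_const)
      have h2 : Set.MapsTo (fun s : ℝ => ((cl s, x) : ℝ × EuclideanSpace ℝ (Fin d)))
          Set.univ (Set.Icc (0:ℝ) T ×ˢ (Set.univ : Set (EuclideanSpace ℝ (Fin d)))) :=
        fun s _ => ⟨hclmem s, mem_univ _⟩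
      have := ContinuousOn.comp hGcont h1.continuousOn h2
      exact continuousOn_univ.mp this
    have hGbd : ∀ s : ℝ, ‖G (cl s) x‖ ≤ C * (1 + ‖x‖) ^ q := fun s => by
      rw [Real.norm_eq_abs]; exact hpoly _ (hclmem s) x
    have hhint : Integrable (fun s => G (cl s) x * φ s) :=
      hφint.bdd_mul hcont.aestronglyMeasurable (Filter.Eventually.of_forall hGbd)
    have hcφint : Integrable (fun s => G t x * φ s) := hφint.const_mul _
    -- rewrite the difference
    have hdiff : Gn n t x - G t x = A * ∫ s, (G (cl s) x - G t x) * φ s := by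
      have h0 : (fun s => (G (cl s) x - G t x) * φ s)
          = fun s => G (cl s) x * φ s - G t x * φ s := by funext s; ring
      rw [h0, integral_sub hhint hcφint, integral_const_mul, hGn]
      have h3 : (∫ s : ℝ, G (min T (max s 0)) x * Real.exp (-((n : ℝ) / 2) * (t - s) ^ 2))
          = ∫ s, G (cl s) x * φ s := rfl
      rw [h3, ← hA]
      linear_combination (G t x) * hone
    -- bound
    have hbound : ∀ s : ℝ, ‖(G (cl s) x - G t x) * φ s‖ ≤
        c * w * (|t - s| ^ α * φ s) := by
      intro s
      rw [Real.norm_eq_abs, abs_mul, abs_of_nonneg (hφnn s)]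
      have h1 : |G (cl s) x - G t x| ≤ c * w * |t - s| ^ α := by
        have h2 := hGhold t ht (cl s) (hclmem s) x
        refine h2.trans ?_
        have h3 : |cl s - t| ^ α ≤ |t - s| ^ α := by
          rw [abs_sub_comm]
          exact Real.rpow_le_rpow (abs_nonneg _) (hcllip t ht s) hα.le
        have h5 : 0 ≤ c * w := by positivity
        nlinarith [h3]
      calc |G (cl s) x - G t x| * φ s ≤ (c * w * |t - s| ^ α) * φ s :=
            mul_le_mul_of_nonneg_right h1 (hφnn s)
        _ = c * w * (|t - s| ^ α * φ s) := by ring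
    have hbint : Integrable (fun s => c * w * (|t - s| ^ α * φ s)) := by
      have h1 : Integrable (fun u : ℝ => |u| ^ α * Real.exp (-b * u ^ 2)) :=
        aux_integrable b α hbpos hα
      have h2 := h1.comp_sub_left t
      exact (h2.const_mul (c * w)).congr (by
        filter_upwards with s
        simp only [hφ])
    -- compute the remaining integral via scaling
    set J := ((∫ u : ℝ, |u| ^ α * Real.exp (-b * u ^ 2)) : ℝ) with hJ
    have habs : |Gn n t x - G t x| ≤ A * ∫ s, c * w * (|t - s| ^ α * φ s) := by
      rw [hdiff, abs_mul, abs_of_nonneg hAnn]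
      refine mul_le_mul_of_nonneg_left ?_ hAnn
      rw [← Real.norm_eq_abs]
      exact norm_integral_le_of_norm_le hbint (Filter.Eventually.of_forall hbound)
    have hintval : ∫ s, c * w * (|t - s| ^ α * φ s) = c * w * J := by
      rw [integral_const_mul, hJ]
      congr 1
      have h6 : (fun s : ℝ => |t - s| ^ α * φ s)
          = fun s => (fun u : ℝ => |u| ^ α * Real.exp (-b * u ^ 2)) (t - s) := by
        funext s; simp only [hφ]
      rw [h6, integral_sub_left_eq_self (fun u : ℝ => |u| ^ α * Real.exp (-b * u ^ 2))
        volume t]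
    -- scaling: J = (√n)^(-α) * (√n)⁻¹ * M
    have hsn : (0:ℝ) < Real.sqrt n := Real.sqrt_pos.2 hn0
    have hJval : J = Real.sqrt (n:ℝ) ^ (-α) * ((Real.sqrt (n:ℝ))⁻¹ * M) := by
      have hptw : ∀ u : ℝ, |u| ^ α * Real.exp (-b * u ^ 2)
          = Real.sqrt (n:ℝ) ^ (-α) *
            ((fun v : ℝ => |v| ^ α * Real.exp (-(1/2 : ℝ) * v ^ 2)) (Real.sqrt (n:ℝ) * u)) := by
        intro u
        simp only
        have h1 : |Real.sqrt (n:ℝ) * u| = Real.sqrt (n:ℝ) * |u| := by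
          rw [abs_mul, abs_of_nonneg (Real.sqrt_nonneg _)]
        have h2 : (Real.sqrt (n:ℝ) * u) ^ 2 = (n:ℝ) * u ^ 2 := by
          rw [mul_pow, Real.sq_sqrt hn0.le]
        rw [h1, h2, Real.mul_rpow (Real.sqrt_nonneg _) (abs_nonneg _)]
        rw [Real.rpow_neg (Real.sqrt_nonneg _)]
        have h3 : Real.sqrt (n:ℝ) ^ α ≠ 0 := by positivity
        have h4 : -(1/2 : ℝ) * ((n:ℝ) * u ^ 2) = -b * u ^ 2 := by rw [hb]; ring
        rw [h4]
        field_simp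
      rw [hJ]
      simp_rw [hptw]
      rw [integral_const_mul, Measure.integral_comp_mul_left
        (fun v : ℝ => |v| ^ α * Real.exp (-(1/2 : ℝ) * v ^ 2)) (Real.sqrt (n:ℝ))]
      rw [abs_of_nonneg (inv_nonneg.2 (Real.sqrt_nonneg _)), smul_eq_mul, hM]
    have hAval : A = Real.sqrt (n:ℝ) / Real.sqrt (2 * Real.pi) := by
      rw [hA, Real.sqrt_div (Nat.cast_nonneg n)]
    have hs2pi : (0:ℝ) < Real.sqrt (2 * Real.pi) := Real.sqrt_pos.2 (by positivity)
    have hAJ : A * J = M * Real.sqrt (n:ℝ) ^ (-α) / Real.sqrt (2 * Real.pi) := by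
      rw [hAval, hJval]
      field_simp
    rw [div_le_iff₀ hwpos]
    calc |Gn n t x - G t x| ≤ A * (c * w * J) := by rw [← hintval]; exact habs
      _ = (c * w) * (A * J) := by ring
      _ = (c * w) * (M * Real.sqrt (n:ℝ) ^ (-α) / Real.sqrt (2 * Real.pi)) := by rw [hAJ]
      _ = B n * w := by rw [hB]; field_simp
  -- limit of B
  have hB0 : Tendsto B atTop (nhds 0) := by
    have h1 : ∀ n : ℕ, Real.sqrt (n:ℝ) ^ (-α) = (n:ℝ) ^ (-(α/2)) := by
      intro n
      rw [Real.sqrt_eq_rpow, ← Real.rpow_mul (Nat.cast_nonneg n)]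
      congr 1; ring
    have h2 : Tendsto (fun n : ℕ => ((n:ℝ)) ^ (-(α/2))) atTop (nhds 0) :=
      (tendsto_rpow_neg_atTop (by positivity)).comp tendsto_natCast_atTop_atTop
    have h3 := h2.const_mul (c / Real.sqrt (2 * Real.pi) * M)
    rw [mul_zero] at h3
    refine h3.congr (fun n => ?_)
    rw [hB]; simp only; rw [h1 n]
  -- squeeze
  refine tendsto_of_tendsto_of_tendsto_of_le_of_le' tendsto_const_nhds hB0 ?_ ?_
  · filter_upwards with n
    refine Real.iSup_nonneg fun t => Real.iSup_nonneg fun x => ?_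
    exact div_nonneg (abs_nonneg _) (Real.rpow_nonneg (by positivity) _)
  · filter_upwards [eventually_ge_atTop 1] with n hn
    have hne : Nonempty (Set.Icc (0:ℝ) T) := ⟨⟨0, left_mem_Icc.mpr hT.le⟩⟩
    refine ciSup_le fun t => ciSup_le fun x => ?_
    exact key n hn t t.2 x
end
end

section
/- Let T, c ∈ [0,∞), α ∈ [0,2), d ∈ ℕ, and let W : [0,T] × Ω → ℝ^d be a standard d-dimensional Brownian motion with continuous sample paths on a probability space (Ω, 𝓕, ℙ). Then the map ω ↦ sup_{t∈[0,T]} ‖W_t(ω)‖_{ℝ^d}^α is 𝓕/𝓑(ℝ)-measurable and E[exp(c · sup_{t∈[0,T]} ‖W_t‖_{ℝ^d}^α)] < ∞. -/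
open MeasureTheory ProbabilityTheory Set Filter Real
open scoped ENNReal NNReal

noncomputable section

/-- A standard `d`-dimensional Brownian motion on `[0,∞)` (indexed by `ℝ`): it starts at `0`
almost surely, has continuous sample paths, measurable marginals, independent increments,
and each increment `W_t − W_s` (for `0 ≤ s ≤ t`) is a centered Gaussian vector with
covariance `(t−s)·Id`, i.e. its coordinates are independent real Gaussians of
variance `t − s`. -/
structure IsStdBrownianMotion {Ω : Type} [MeasurableSpace Ω] (P : MeasureTheory.Measure Ω)
    {d : ℕ} (W : ℝ → Ω → EuclideanSpace ℝ (Fin d)) : Prop where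
  meas : ∀ t : ℝ, Measurable (W t)
  init : ∀ᵐ ω ∂P, W 0 ω = 0
  cont : ∀ ω, Continuous fun t => W t ω
  indep_incr : ∀ (n : ℕ) (t : Fin (n + 1) → ℝ), Monotone t →
    ProbabilityTheory.iIndepFun
      (fun (k : Fin n) ω => W (t k.succ) ω - W (t k.castSucc) ω) P
  gauss_coord : ∀ s t : ℝ, 0 ≤ s → s ≤ t → ∀ i : Fin d,
    MeasureTheory.Measure.map (fun ω => W t ω i - W s ω i) P
      = ProbabilityTheory.gaussianReal 0 (Real.toNNReal (t - s))
  indep_coord : ∀ s t : ℝ, 0 ≤ s → s ≤ t →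
    ProbabilityTheory.iIndepFun
      (fun (i : Fin d) ω => W t ω i - W s ω i) P


lemma gauss_pdf_mul (v : NNReal) (hv : v ≠ 0) (t x : ℝ) :
    Real.exp (t * x) * gaussianPDFReal 0 v x
      = Real.exp ((v:ℝ) * t ^ 2 / 2) * gaussianPDFReal (t * v) v x := by
  have hv' : (0:ℝ) < (v:ℝ) := by
    have := v.2; rcases this.lt_or_eq with h | h
    · exact h
    · exact absurd (by ext; exact h.symm) hv
  unfold gaussianPDFReal
  rw [mul_left_comm, mul_left_comm (Real.exp ((v:ℝ) * t ^ 2 / 2)), ← Real.exp_add,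
    ← Real.exp_add]
  congr 2
  field_simp
  ring

lemma gauss_lintegral_exp (v : NNReal) (hv : v ≠ 0) (t : ℝ) :
    ∫⁻ x, ENNReal.ofReal (Real.exp (t * x)) ∂(gaussianReal 0 v)
      = ENNReal.ofReal (Real.exp ((v:ℝ) * t ^ 2 / 2)) := by
  rw [gaussianReal_of_var_ne_zero 0 hv,
    lintegral_withDensity_eq_lintegral_mul _ (measurable_gaussianPDF 0 v)
      (by fun_prop)]
  have heq : ∀ x : ℝ, (gaussianPDF 0 v * fun x => ENNReal.ofReal (Real.exp (t * x))) x
      = ENNReal.ofReal (Real.exp ((v:ℝ) * t ^ 2 / 2)) * gaussianPDF (t * v) v x := by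
    intro x
    simp only [Pi.mul_apply, gaussianPDF]
    rw [← ENNReal.ofReal_mul (gaussianPDFReal_nonneg _ _ _),
      ← ENNReal.ofReal_mul (Real.exp_nonneg _)]
    congr 1
    rw [mul_comm (gaussianPDFReal 0 v x), gauss_pdf_mul v hv t x]
  simp only [heq]
  rw [lintegral_const_mul _ (measurable_gaussianPDF _ _), lintegral_gaussianPDF_eq_one _ hv,
    mul_one]

lemma gauss_tail (v : NNReal) {t : ℝ} (ht : 0 ≤ t) (y : ℝ) :
    (gaussianReal 0 v) {x | y ≤ x}
      ≤ ENNReal.ofReal (Real.exp ((v:ℝ) * t ^ 2 / 2 - t * y)) := by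
  by_cases hv : v = 0
  · subst hv
    rw [gaussianReal_zero_var]
    by_cases hy : y ≤ (0:ℝ)
    · calc Measure.dirac (0:ℝ) {x | y ≤ x} ≤ Measure.dirac (0:ℝ) Set.univ :=
            measure_mono (subset_univ _)
        _ = 1 := by simp
        _ ≤ _ := by
            rw [ENNReal.one_le_ofReal]
            simp only [NNReal.coe_zero, zero_mul, zero_div, zero_sub]
            exact Real.one_le_exp (by nlinarith)
    · have : (0:ℝ) ∉ {x | y ≤ x} := by simpa using lt_of_not_ge hy
      rw [Measure.dirac_apply' _ (show MeasurableSet {x : ℝ | y ≤ x} from measurableSet_Ici)]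
      simp [Set.indicator_of_notMem this]
  · have step1 : (gaussianReal 0 v) {x | y ≤ x}
        ≤ ∫⁻ x, ENNReal.ofReal (Real.exp (t * (x - y))) ∂(gaussianReal 0 v) := by
      rw [← lintegral_indicator_one (show MeasurableSet {x : ℝ | y ≤ x} from measurableSet_Ici)]
      refine lintegral_mono fun x => ?_
      by_cases hx : x ∈ {x | y ≤ x}
      · rw [Set.indicator_of_mem hx, Pi.one_apply, ENNReal.one_le_ofReal]
        exact Real.one_le_exp (by nlinarith [hx.out])
      · simp [Set.indicator_of_notMem hx]
    refine step1.trans ?_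
    have : ∀ x : ℝ, ENNReal.ofReal (Real.exp (t * (x - y)))
        = ENNReal.ofReal (Real.exp (-(t*y))) * ENNReal.ofReal (Real.exp (t * x)) := by
      intro x
      rw [← ENNReal.ofReal_mul (Real.exp_nonneg _), ← Real.exp_add]
      ring_nf
    simp only [this]
    rw [lintegral_const_mul _ (by fun_prop), gauss_lintegral_exp v hv t,
      ← ENNReal.ofReal_mul (Real.exp_nonneg _), ← Real.exp_add]
    apply le_of_eq
    congr 1
    ring

lemma gauss_map_neg (v : NNReal) :
    (gaussianReal 0 v).map (fun x => -x) = gaussianReal 0 v := by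
  have h := gaussianReal_map_const_mul (μ := 0) (v := v) (-1)
  have h2 : (fun x : ℝ => -1 * x) = fun x => -x := by funext x; ring
  rw [h2] at h
  rw [h]
  congr 1
  · ring
  · ext; norm_num

lemma gauss_neg_apply (v : NNReal) (w : ℝ) :
    (gaussianReal 0 v) {x | x ≤ w} = (gaussianReal 0 v) {x | -w ≤ x} := by
  conv_lhs => rw [← gauss_map_neg v]
  rw [Measure.map_apply measurable_neg (show MeasurableSet {x : ℝ | x ≤ w} from measurableSet_Iic)]
  congr 1
  ext x
  simp only [Set.mem_preimage, Set.mem_setOf_eq]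
  constructor <;> intro h <;> linarith

lemma gauss_half_ge (v : NNReal) : (1:ℝ≥0∞) / 2 ≤ (gaussianReal 0 v) {x | 0 ≤ x} := by
  have hcov : (Set.univ : Set ℝ) ⊆ {x | x ≤ 0} ∪ {x | 0 ≤ x} := by
    intro x _; rcases le_total x 0 with h | h
    · exact Or.inl h
    · exact Or.inr h
  have h1 : (1:ℝ≥0∞) ≤ 2 * (gaussianReal 0 v) {x | 0 ≤ x} := by
    calc (1:ℝ≥0∞) = (gaussianReal 0 v) Set.univ := by simp
      _ ≤ (gaussianReal 0 v) ({x | x ≤ 0} ∪ {x | 0 ≤ x}) := measure_mono hcov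
      _ ≤ (gaussianReal 0 v) {x | x ≤ 0} + (gaussianReal 0 v) {x | 0 ≤ x} := measure_union_le _ _
      _ = 2 * (gaussianReal 0 v) {x | 0 ≤ x} := by
          rw [gauss_neg_apply v 0]; norm_num; ring
  calc (1:ℝ≥0∞) / 2 ≤ (2 * (gaussianReal 0 v) {x | 0 ≤ x})/2 := by
        exact ENNReal.div_le_div_right h1 2
    _ = (gaussianReal 0 v) {x | 0 ≤ x} := by
        rw [mul_comm, mul_div_assoc, ENNReal.div_self (by norm_num) (by norm_num), mul_one]

lemma gauss_half_le (v : NNReal) : (1:ℝ≥0∞) / 2 ≤ (gaussianReal 0 v) {x | x ≤ 0} := by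
  rw [gauss_neg_apply v 0]
  simpa using gauss_half_ge v

lemma gauss_tail_le (v : NNReal) {t : ℝ} (ht : 0 ≤ t) (y : ℝ) :
    (gaussianReal 0 v) {x | x ≤ -y}
      ≤ ENNReal.ofReal (Real.exp ((v:ℝ) * t ^ 2 / 2 - t * y)) := by
  rw [gauss_neg_apply v (-y), show -(-y) = y by ring]
  exact gauss_tail v ht y

lemma ottaviani {Ω : Type} [MeasurableSpace Ω] {P : Measure Ω} [IsProbabilityMeasure P]
    (N : ℕ) (Y : ℕ → Ω → ℝ) (hm : ∀ k, Measurable (Y k))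
    (hind : iIndepFun (fun k : Fin N => Y k) P)
    (hhalf : ∀ k, k ≤ N → (1:ℝ≥0∞) / 2 ≤ P {ω | 0 ≤ ∑ j ∈ Finset.Ico k N, Y j ω})
    (y : ℝ) :
    P {ω | ∃ k ≤ N, y ≤ ∑ j ∈ Finset.range k, Y j ω}
      ≤ 2 * P {ω | y ≤ ∑ j ∈ Finset.range N, Y j ω} := by
  classical
  set S : ℕ → Ω → ℝ := fun m ω => ∑ j ∈ Finset.range m, Y j ω with hSdef
  have hSm : ∀ m, Measurable (S m) := fun m => Finset.measurable_sum _ fun j _ => hm j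
  set A : ℕ → Set Ω := fun k => {ω | y ≤ S k ω ∧ ∀ j < k, ¬ y ≤ S j ω} with hAdef
  set B : ℕ → Set Ω := fun k => {ω | 0 ≤ ∑ j ∈ Finset.Ico k N, Y j ω} with hBdef
  have hAmeas : ∀ k, MeasurableSet (A k) := by
    intro k
    have hA2 : A k = {ω | y ≤ S k ω} ∩ ⋂ (j : ℕ) (_ : j < k), {ω | ¬ y ≤ S j ω} := by
      ext ω; simp [hAdef]
    rw [hA2]
    exact (measurableSet_le measurable_const (hSm k)).inter
      (MeasurableSet.iInter fun j => MeasurableSet.iInter fun _ =>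
        (measurableSet_le measurable_const (hSm j)).compl)
  have hBmeas : ∀ k, MeasurableSet (B k) :=
    fun k => measurableSet_le measurable_const (Finset.measurable_sum _ fun j _ => hm j)
  have hUnion : {ω | ∃ k ≤ N, y ≤ S k ω} = ⋃ k ∈ Finset.range (N+1), A k := by
    ext ω
    simp only [Set.mem_setOf_eq, Set.mem_iUnion, Finset.mem_range, exists_prop, hAdef]
    constructor
    · rintro ⟨k, hkN, hky⟩
      have hex : ∃ m, y ≤ S m ω := ⟨k, hky⟩
      refine ⟨Nat.find hex, ?_, Nat.find_spec hex, fun j hj => Nat.find_min hex hj⟩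
      have := Nat.find_min' hex hky
      omega
    · rintro ⟨k, hk, hky, _⟩; exact ⟨k, by omega, hky⟩
  have hdisj2 : ∀ k l, k < l → Disjoint (A k) (A l) := by
    intro k l hkl
    rw [Set.disjoint_left]
    rintro ω ⟨hky, -⟩ ⟨-, hl⟩
    exact hl k hkl hky
  have hdisj : (↑(Finset.range (N+1)) : Set ℕ).PairwiseDisjoint A := by
    intro k _ l _ hkl
    rcases hkl.lt_or_gt with h | h
    · exact hdisj2 k l h
    · exact (hdisj2 l k h).symm
  have hkey : ∀ k, k ≤ N → P (A k ∩ B k) = P (A k) * P (B k) := by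
    intro k hkN
    set S1 : Finset (Fin N) := Finset.univ.filter (fun i => (i:ℕ) < k) with hS1
    set S2 : Finset (Fin N) := Finset.univ.filter (fun i => k ≤ (i:ℕ)) with hS2
    have hdisj12 : Disjoint S1 S2 := by
      rw [Finset.disjoint_left]
      intro i h1 h2
      simp only [hS1, hS2, Finset.mem_filter, Finset.mem_univ, true_and] at h1 h2
      omega
    have hIF := hind.indepFun_finset S1 S2 hdisj12 (fun i => hm i)
    set Tsum : ℕ → ({ i // i ∈ S1 } → ℝ) → ℝ :=
      fun m v => ∑ i : { i // i ∈ S1 }, if ((i : Fin N) : ℕ) < m then v i else 0 with hTdef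
    have hTmeas : ∀ m, Measurable (Tsum m) := by
      intro m
      apply Finset.measurable_sum
      intro i _
      by_cases h : ((i : Fin N) : ℕ) < m
      · simpa [h] using measurable_pi_apply i
      · simpa [h] using measurable_const
    set C1 : Set ({ i // i ∈ S1 } → ℝ) :=
      {v | y ≤ Tsum k v ∧ ∀ j < k, ¬ y ≤ Tsum j v} with hC1def
    have hC1 : MeasurableSet C1 := by
      have hC1' : C1 = {v | y ≤ Tsum k v} ∩ ⋂ (j : ℕ) (_ : j < k), {v | ¬ y ≤ Tsum j v} := by
        ext v; simp [hC1def]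
      rw [hC1']
      exact (measurableSet_le measurable_const (hTmeas k)).inter
        (MeasurableSet.iInter fun j => MeasurableSet.iInter fun _ =>
          (measurableSet_le measurable_const (hTmeas j)).compl)
    set C2 : Set ({ i // i ∈ S2 } → ℝ) := {v | 0 ≤ ∑ i : { i // i ∈ S2 }, v i} with hC2def
    have hC2 : MeasurableSet C2 :=
      measurableSet_le measurable_const (Finset.measurable_sum _ fun i _ => measurable_pi_apply i)
    have hTS : ∀ m, m ≤ k → ∀ ω, Tsum m (fun i : { i // i ∈ S1 } => Y ((i : Fin N) : ℕ) ω)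
        = S m ω := by
      intro m hmk ω
      rw [hTdef]
      calc (∑ i : { i // i ∈ S1 }, if ((i : Fin N) : ℕ) < m
              then Y ((i : Fin N) : ℕ) ω else 0)
          = ∑ i ∈ S1, (if (i:ℕ) < m then Y (i:ℕ) ω else 0) := by
            rw [Finset.sum_coe_sort S1 (fun i : Fin N => if (i:ℕ) < m then Y (i:ℕ) ω else 0)]
        _ = ∑ i : Fin N, if (i:ℕ) < k then (if (i:ℕ) < m then Y (i:ℕ) ω else 0) else 0 := by
            rw [hS1, Finset.sum_filter]
        _ = ∑ i : Fin N, (if (i:ℕ) < m then Y (i:ℕ) ω else 0) := by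
            apply Finset.sum_congr rfl
            intro i _
            by_cases h : (i:ℕ) < m
            · simp [h, lt_of_lt_of_le h hmk]
            · rw [if_neg h]
              by_cases h2 : (i:ℕ) < k <;> simp [h2, h]
        _ = ∑ j ∈ Finset.range N, (if j < m then Y j ω else 0) := by
            rw [Fin.sum_univ_eq_sum_range (fun j => if j < m then Y j ω else 0) N]
        _ = ∑ j ∈ (Finset.range N).filter (fun j => j < m), Y j ω := by
            rw [Finset.sum_filter]
        _ = S m ω := by
            rw [hSdef]
            congr 1
            ext j
            simp only [Finset.mem_filter, Finset.mem_range]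
            omega
    have hA_pre : A k = (fun a (i : { i // i ∈ S1 }) => Y ((i : Fin N) : ℕ) a) ⁻¹' C1 := by
      ext ω
      simp only [hAdef, hC1def, Set.mem_setOf_eq, Set.mem_preimage]
      rw [hTS k le_rfl ω]
      constructor
      · rintro ⟨h1, h2⟩
        exact ⟨h1, fun j hj => by rw [hTS j hj.le ω]; exact h2 j hj⟩
      · rintro ⟨h1, h2⟩
        refine ⟨h1, fun j hj => ?_⟩
        have := h2 j hj
        rwa [hTS j hj.le ω] at this
    have hB_pre : B k = (fun a (i : { i // i ∈ S2 }) => Y ((i : Fin N) : ℕ) a) ⁻¹' C2 := by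
      ext ω
      simp only [hBdef, hC2def, Set.mem_setOf_eq, Set.mem_preimage]
      have : (∑ i : { i // i ∈ S2 }, Y ((i : Fin N) : ℕ) ω) = ∑ j ∈ Finset.Ico k N, Y j ω := by
        calc (∑ i : { i // i ∈ S2 }, Y ((i : Fin N) : ℕ) ω)
            = ∑ i ∈ S2, Y (i:ℕ) ω := by
              rw [Finset.sum_coe_sort S2 (fun i : Fin N => Y (i:ℕ) ω)]
          _ = ∑ i : Fin N, if k ≤ (i:ℕ) then Y (i:ℕ) ω else 0 := by
              rw [hS2, Finset.sum_filter]
          _ = ∑ j ∈ Finset.range N, (if k ≤ j then Y j ω else 0) := by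
              rw [Fin.sum_univ_eq_sum_range (fun j => if k ≤ j then Y j ω else 0) N]
          _ = ∑ j ∈ (Finset.range N).filter (fun j => k ≤ j), Y j ω := by
              rw [Finset.sum_filter]
          _ = ∑ j ∈ Finset.Ico k N, Y j ω := by
              congr 1
              ext j
              simp only [Finset.mem_filter, Finset.mem_range, Finset.mem_Ico]
              omega
      rw [this]
    rw [hA_pre, hB_pre]
    exact hIF.measure_inter_preimage_eq_mul C1 C2 hC1 hC2
  have hstep : ∀ k ∈ Finset.range (N+1), P (A k) ≤ 2 * P (A k ∩ B k) := by
    intro k hk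
    have hkN : k ≤ N := by simpa [Nat.lt_succ_iff] using hk
    have h2 : (1:ℝ≥0∞) ≤ 2 * P (B k) := by
      calc (1:ℝ≥0∞) = 2 * (1 / 2) := by
            rw [one_div, ENNReal.mul_inv_cancel (by norm_num) (by norm_num)]
        _ ≤ 2 * P (B k) := mul_le_mul_right (hhalf k hkN) 2
    calc P (A k) = P (A k) * 1 := (mul_one _).symm
      _ ≤ P (A k) * (2 * P (B k)) := mul_le_mul_right h2 _
      _ = 2 * (P (A k) * P (B k)) := by ring
      _ = 2 * P (A k ∩ B k) := by rw [hkey k hkN]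
  have hdisj' : (↑(Finset.range (N+1)) : Set ℕ).PairwiseDisjoint (fun k => A k ∩ B k) := by
    intro k hk l hl hkl
    exact ((hdisj hk hl hkl).mono inter_subset_left inter_subset_left)
  calc P {ω | ∃ k ≤ N, y ≤ ∑ j ∈ Finset.range k, Y j ω}
      = P (⋃ k ∈ Finset.range (N+1), A k) := by rw [← hUnion]
    _ = ∑ k ∈ Finset.range (N+1), P (A k) :=
        measure_biUnion_finset hdisj (fun k _ => hAmeas k)
    _ ≤ ∑ k ∈ Finset.range (N+1), 2 * P (A k ∩ B k) := Finset.sum_le_sum hstep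
    _ = 2 * ∑ k ∈ Finset.range (N+1), P (A k ∩ B k) := by rw [Finset.mul_sum]
    _ = 2 * P (⋃ k ∈ Finset.range (N+1), A k ∩ B k) := by
        rw [measure_biUnion_finset hdisj' (fun k _ => (hAmeas k).inter (hBmeas k))]
    _ ≤ 2 * P {ω | y ≤ ∑ j ∈ Finset.range N, Y j ω} := by
        apply mul_le_mul_right
        apply measure_mono
        intro ω hω
        simp only [Set.mem_iUnion, Finset.mem_range, exists_prop] at hω
        obtain ⟨k, hk, ⟨hky, -⟩, hb⟩ := hω
        have hkN : k ≤ N := by omega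
        have hsum : S k ω + ∑ j ∈ Finset.Ico k N, Y j ω = S N ω := by
          rw [hSdef]
          simp only
          rw [Finset.range_eq_Ico, Finset.range_eq_Ico]
          exact Finset.sum_Ico_consecutive (fun j => Y j ω) (Nat.zero_le k) hkN
        have hb' : 0 ≤ ∑ j ∈ Finset.Ico k N, Y j ω := hb
        show y ≤ S N ω
        linarith

noncomputable def dyadPt (T : ℝ) (n k : ℕ) : ℝ := min ((k:ℝ) * T / 2^n) T

lemma dyadPt_mem {T : ℝ} (hT : 0 ≤ T) (n k : ℕ) : dyadPt T n k ∈ Set.Icc (0:ℝ) T := by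
  constructor
  · apply le_min _ hT
    positivity
  · exact min_le_right _ _

lemma dyadPt_mono {T : ℝ} (n : ℕ) {k l : ℕ} (hkl : k ≤ l) (hT : 0 ≤ T) :
    dyadPt T n k ≤ dyadPt T n l := by
  apply min_le_min _ le_rfl
  apply div_le_div_of_nonneg_right ?_ (by positivity)
  exact mul_le_mul_of_nonneg_right (by exact_mod_cast hkl) hT

lemma dyadPt_zero {T : ℝ} (hT : 0 ≤ T) (n : ℕ) : dyadPt T n 0 = 0 := by
  simp [dyadPt, hT]

lemma dyadPt_last (T : ℝ) (n : ℕ) : dyadPt T n (2^n) = T := by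
  have h2 : ((2:ℝ)^n) ≠ 0 := by positivity
  simp only [dyadPt]
  rw [show ((2^n : ℕ) : ℝ) = (2:ℝ)^n by push_cast; ring, mul_comm, mul_div_assoc,
    div_self h2, mul_one, min_self]

lemma dyadPt_succ (T : ℝ) (n k : ℕ) : dyadPt T (n+1) (2*k) = dyadPt T n k := by
  simp only [dyadPt]
  congr 1
  push_cast
  rw [pow_succ]
  field_simp

lemma dyadSup_mono {T : ℝ} (hT : 0 ≤ T) (h : ℝ → ℝ) :
    Monotone fun n : ℕ => ⨆ k : Fin (2^n+1), h (dyadPt T n k) := by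
  apply monotone_nat_of_le_succ
  intro n
  apply ciSup_le
  intro k
  have hk2 : 2 * (k:ℕ) < 2^(n+1) + 1 := by
    have := k.2
    rw [pow_succ]
    omega
  have heq : h (dyadPt T n k) = h (dyadPt T (n+1) (2*(k:ℕ))) := by rw [dyadPt_succ]
  rw [heq]
  exact le_ciSup (f := fun k : Fin (2^(n+1)+1) => h (dyadPt T (n+1) (k:ℕ)))
    (Set.Finite.bddAbove (Set.finite_range _)) (⟨2*(k:ℕ), hk2⟩ : Fin (2^(n+1)+1))

lemma dyad_sup {T : ℝ} (hT : 0 < T) {h : ℝ → ℝ} (hcont : Continuous h) :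
    (⨆ t : Set.Icc (0:ℝ) T, h t) = ⨆ n : ℕ, ⨆ k : Fin (2^n+1), h (dyadPt T n k) := by
  have hne : Nonempty (Set.Icc (0:ℝ) T) := ⟨⟨0, le_rfl, hT.le⟩⟩
  obtain ⟨t₀, ht₀, hmax'⟩ := isCompact_Icc.exists_isMaxOn ⟨0, le_rfl, hT.le⟩
    hcont.continuousOn
  have hmax : ∀ t ∈ Set.Icc (0:ℝ) T, h t ≤ h t₀ := fun t ht => hmax' ht
  have hbdd : BddAbove (Set.range fun t : Set.Icc (0:ℝ) T => h t) := by
    refine ⟨h t₀, ?_⟩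
    rintro x ⟨t, rfl⟩
    exact hmax t t.2
  set G : ℕ → ℝ := fun n => ⨆ k : Fin (2^n+1), h (dyadPt T n k) with hG
  have hGle : ∀ n, G n ≤ ⨆ t : Set.Icc (0:ℝ) T, h t := by
    intro n
    apply ciSup_le
    intro k
    exact le_ciSup_of_le hbdd ⟨dyadPt T n k, dyadPt_mem hT.le n k⟩ le_rfl
  have hbddG : BddAbove (Set.range G) := by
    refine ⟨⨆ t : Set.Icc (0:ℝ) T, h t, ?_⟩
    rintro x ⟨n, rfl⟩
    exact hGle n
  apply le_antisymm
  · apply ciSup_le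
    rintro ⟨t, ht0, htT⟩
    set u : ℕ → ℝ := fun n => dyadPt T n ⌊t * 2^n / T⌋₊ with hu
    have hkle : ∀ n : ℕ, (⌊t * 2^n / T⌋₊ : ℝ) * T / 2^n ≤ t := by
      intro n
      rw [div_le_iff₀ (by positivity)]
      calc (⌊t * 2^n / T⌋₊ : ℝ) * T ≤ (t * 2^n / T) * T :=
            mul_le_mul_of_nonneg_right (Nat.floor_le (by positivity)) hT.le
        _ = t * 2^n := by field_simp
    have huval : ∀ n, u n = (⌊t * 2^n / T⌋₊ : ℝ) * T / 2^n := by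
      intro n
      exact min_eq_left ((hkle n).trans htT)
    have hlow : ∀ n : ℕ, t - T / 2^n ≤ u n := by
      intro n
      rw [huval n]
      have hpow : (0:ℝ) < 2^n := by positivity
      have hfl : t * 2^n / T < (⌊t * 2^n / T⌋₊ : ℝ) + 1 := Nat.lt_floor_add_one _
      have h1 : t * 2^n < ((⌊t * 2^n / T⌋₊ : ℝ) + 1) * T := by
        rw [div_lt_iff₀ hT] at hfl
        linarith
      rw [le_div_iff₀ hpow]
      have h2 : (T/2^n) * 2^n = T := div_mul_cancel₀ _ hpow.ne'
      nlinarith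
    have htend : Tendsto u atTop (nhds t) := by
      have h1 : Tendsto (fun n : ℕ => t - T / 2^n) atTop (nhds t) := by
        have h2 : Tendsto (fun n : ℕ => T * (1/2:ℝ)^n) atTop (nhds 0) := by
          rw [show (0:ℝ) = T * 0 by ring]
          exact (tendsto_pow_atTop_nhds_zero_of_lt_one (by norm_num) (by norm_num)).const_mul T
        have h3 : (fun n : ℕ => t - T / 2^n) = fun n => t - T * (1/2:ℝ)^n := by
          funext n; rw [div_pow, one_pow]; ring
        rw [h3, show nhds t = nhds (t - 0) by rw [sub_zero]]
        exact tendsto_const_nhds.sub h2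
      refine tendsto_of_tendsto_of_tendsto_of_le_of_le h1 tendsto_const_nhds hlow ?_
      intro n
      rw [huval n]
      exact hkle n
    have hle : ∀ n, h (u n) ≤ ⨆ n, G n := by
      intro n
      have hkn : ⌊t * 2^n / T⌋₊ < 2^n + 1 := by
        have h1 := hkle n
        rw [div_le_iff₀ (show (0:ℝ) < 2^n by positivity)] at h1
        by_contra hcon
        push_neg at hcon
        have h2 : (2:ℝ)^n + 1 ≤ (⌊t * 2^n / T⌋₊ : ℝ) := by exact_mod_cast hcon
        nlinarith [htT, hT, show (0:ℝ) < 2^n by positivity]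
      calc h (u n) ≤ G n :=
            le_ciSup (f := fun k : Fin (2^n+1) => h (dyadPt T n (k:ℕ)))
              (Set.Finite.bddAbove (Set.finite_range _))
              (⟨⌊t * 2^n / T⌋₊, hkn⟩ : Fin (2^n+1))
        _ ≤ ⨆ n, G n := le_ciSup hbddG n
    exact le_of_tendsto ((hcont.continuousAt.tendsto).comp htend) (Filter.Eventually.of_forall hle)
  · exact ciSup_le hGle

lemma exists_coord {d : ℕ} (hd : 0 < d) (v : EuclideanSpace ℝ (Fin d)) :
    ∃ i, ‖v‖ ≤ d * |v i| := by
  have hne : Nonempty (Fin d) := ⟨⟨0, hd⟩⟩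
  obtain ⟨i, -, hi⟩ := Finset.exists_max_image Finset.univ (fun i => |v i|)
    ⟨⟨0, hd⟩, Finset.mem_univ _⟩
  refine ⟨i, ?_⟩
  rw [EuclideanSpace.norm_eq]
  have hd1 : (1:ℝ) ≤ d := by exact_mod_cast hd
  calc √(∑ j, ‖v j‖^2) ≤ √(∑ _j : Fin d, |v i|^2) := by
        apply Real.sqrt_le_sqrt
        apply Finset.sum_le_sum
        intro j _
        rw [Real.norm_eq_abs]
        exact pow_le_pow_left₀ (abs_nonneg _) (hi j (Finset.mem_univ _)) 2
    _ = √((d:ℝ) * |v i|^2) := by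
        rw [Finset.sum_const, Finset.card_univ, Fintype.card_fin, nsmul_eq_mul]
    _ = √(d:ℝ) * |v i| := by
        rw [Real.sqrt_mul (by positivity), Real.sqrt_sq (abs_nonneg _)]
    _ ≤ d * |v i| := by
        apply mul_le_mul_of_nonneg_right _ (abs_nonneg _)
        calc √(d:ℝ) ≤ √((d:ℝ)^2) := Real.sqrt_le_sqrt (by nlinarith)
          _ = d := Real.sqrt_sq (by positivity)

lemma young_ineq {c α K : ℝ} (hc : 0 ≤ c) (hα0 : 0 ≤ α) (hα2 : α < 2) (hK : 0 < K) :
    ∃ C : ℝ, 0 ≤ C ∧ ∀ x : ℝ, 0 ≤ x → c * x ^ α ≤ x^2/(2*K) + C := by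
  have h2α : (0:ℝ) < 2 - α := by linarith
  set R : ℝ := max 1 ((2*K*c) ^ (1/(2-α))) with hR
  have hR1 : (1:ℝ) ≤ R := le_max_left _ _
  have hR0 : (0:ℝ) < R := lt_of_lt_of_le one_pos hR1
  refine ⟨c * R ^ α, by positivity, ?_⟩
  intro x hx
  rcases le_total x R with hxR | hxR
  · have h1 : c * x ^ α ≤ c * R ^ α :=
      mul_le_mul_of_nonneg_left (Real.rpow_le_rpow hx hxR hα0) hc
    have h2 : 0 ≤ x^2/(2*K) := by positivity
    linarith
  · have hx0 : (0:ℝ) < x := lt_of_lt_of_le hR0 hxR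
    have hRpos : (0:ℝ) < R ^ (2-α) := Real.rpow_pos_of_pos hR0 _
    have h2a : 2*K*c ≤ R ^ (2-α) := by
      calc 2*K*c = ((2*K*c) ^ (1/(2-α))) ^ (2-α) := by
            rw [← Real.rpow_mul (by positivity), one_div, inv_mul_cancel₀ h2α.ne',
              Real.rpow_one]
        _ ≤ R ^ (2-α) := Real.rpow_le_rpow (Real.rpow_nonneg (by positivity) _)
            (le_max_right _ _) h2α.le
    have hxα : x ^ α = x^2 * x ^ (α - 2) := by
      rw [← Real.rpow_natCast x 2, ← Real.rpow_add hx0]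
      norm_num
    have hmono : x ^ (α-2) ≤ R ^ (α-2) :=
      Real.rpow_le_rpow_of_nonpos hR0 hxR (by linarith)
    have hRrw : R ^ (α-2) = (R ^ (2-α))⁻¹ := by
      rw [← Real.rpow_neg hR0.le]
      congr 1
      ring
    have hcR : c * R ^ (α-2) ≤ 1/(2*K) := by
      rw [hRrw, mul_comm, ← div_eq_inv_mul, div_le_div_iff₀ hRpos (by positivity)]
      nlinarith
    have hfinal : c * x ^ α ≤ x^2/(2*K) := by
      calc c * x ^ α = x^2 * (c * x ^ (α-2)) := by rw [hxα]; ring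
        _ ≤ x^2 * (c * R ^ (α-2)) := by
            apply mul_le_mul_of_nonneg_left _ (sq_nonneg x)
            exact mul_le_mul_of_nonneg_left hmono hc
        _ ≤ x^2 * (1/(2*K)) := mul_le_mul_of_nonneg_left hcR (sq_nonneg x)
        _ = x^2/(2*K) := by ring
    have hC : 0 ≤ c * R ^ α := by positivity
    linarith

lemma bm_tail {Ω : Type} [MeasurableSpace Ω] (P : Measure Ω) [IsProbabilityMeasure P]
    {d : ℕ} (hd : 0 < d) {T : ℝ} (hT : 0 < T)
    (W : ℝ → Ω → EuclideanSpace ℝ (Fin d)) (hW : IsStdBrownianMotion P W)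
    (n : ℕ) (x : ℝ) {t : ℝ} (ht : 0 ≤ t) :
    P {ω | x < ⨆ k : Fin (2^n+1), ‖W (dyadPt T n (k:ℕ)) ω‖}
      ≤ (4*(d:ℝ≥0∞)) * ENNReal.ofReal (Real.exp (T*t^2/2 - t*(x/d))) := by
  classical
  set N := 2^n with hN
  have hWm : ∀ (s : ℝ) (i : Fin d), Measurable fun ω => W s ω i :=
    fun s i => (EuclideanSpace.proj (𝕜 := ℝ) i).continuous.measurable.comp (hW.meas s)
  set τ : ℕ → ℝ := fun k => dyadPt T n k with hτ
  have hτ0 : τ 0 = 0 := dyadPt_zero hT.le n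
  have hτN : τ N = T := dyadPt_last T n
  have hτmem : ∀ k, τ k ∈ Set.Icc (0:ℝ) T := fun k => dyadPt_mem hT.le n k
  set Yp : Fin d → ℕ → Ω → ℝ := fun i k ω => W (τ (k+1)) ω i - W (τ k) ω i with hYp
  set Ym : Fin d → ℕ → Ω → ℝ := fun i k ω => -(W (τ (k+1)) ω i - W (τ k) ω i) with hYm
  have hYpm : ∀ i k, Measurable (Yp i k) := fun i k => (hWm _ i).sub (hWm _ i)
  have hYmm : ∀ i k, Measurable (Ym i k) := fun i k => (hYpm i k).neg
  have htelp : ∀ (i : Fin d) (m : ℕ) (ω : Ω), ∑ j ∈ Finset.range m, Yp i j ω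
      = W (τ m) ω i - W (τ 0) ω i := by
    intro i m ω
    exact Finset.sum_range_sub (fun j => W (τ j) ω i) m
  have htelm : ∀ (i : Fin d) (m : ℕ) (ω : Ω), ∑ j ∈ Finset.range m, Ym i j ω
      = -(W (τ m) ω i - W (τ 0) ω i) := by
    intro i m ω
    rw [← htelp i m ω, ← Finset.sum_neg_distrib]
  have htel_ico : ∀ (i : Fin d) (k : ℕ), k ≤ N → ∀ ω, ∑ j ∈ Finset.Ico k N, Yp i j ω
      = W (τ N) ω i - W (τ k) ω i := by
    intro i k hk ω
    rw [Finset.sum_Ico_eq_sub _ hk, htelp i N ω, htelp i k ω]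
    ring
  have hmonoτ : Monotone (fun j : Fin (N+1) => τ (j:ℕ)) := by
    intro a b hab
    exact dyadPt_mono n (by exact_mod_cast hab) hT.le
  have hinc := hW.indep_incr N (fun j : Fin (N+1) => τ (j:ℕ)) hmonoτ
  have hindp : ∀ i : Fin d, iIndepFun
      (fun k : Fin N => Yp i (k:ℕ)) P := by
    intro i
    have h1 := hinc.comp (fun _ (v : EuclideanSpace ℝ (Fin d)) => v i)
      (fun _ => (EuclideanSpace.proj (𝕜 := ℝ) i).continuous.measurable)
    have h2 : (fun k : Fin N => (fun v : EuclideanSpace ℝ (Fin d) => v i)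
        ∘ (fun ω => W ((fun j : Fin (N+1) => τ (j:ℕ)) k.succ) ω
              - W ((fun j : Fin (N+1) => τ (j:ℕ)) k.castSucc) ω))
        = fun k : Fin N => Yp i (k:ℕ) := by
      funext k ω
      simp only [Function.comp_apply, hYp, Fin.val_succ, Fin.coe_castSucc]
      rfl
    rwa [h2] at h1
  have hindm : ∀ i : Fin d, iIndepFun
      (fun k : Fin N => Ym i (k:ℕ)) P := by
    intro i
    have h1 := (hindp i).comp (fun _ (z : ℝ) => -z) (fun _ => measurable_neg)
    have h2 : (fun k : Fin N => (fun z : ℝ => -z) ∘ (fun ω => Yp i (k:ℕ) ω))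
        = fun k : Fin N => Ym i (k:ℕ) := by
      funext k ω
      simp [hYm, hYp, Function.comp]
    rwa [h2] at h1
  have hhalfp : ∀ i : Fin d, ∀ k, k ≤ N →
      (1:ℝ≥0∞) / 2 ≤ P {ω | 0 ≤ ∑ j ∈ Finset.Ico k N, Yp i j ω} := by
    intro i k hk
    have hset : {ω | 0 ≤ ∑ j ∈ Finset.Ico k N, Yp i j ω}
        = (fun ω => W T ω i - W (τ k) ω i) ⁻¹' {z | 0 ≤ z} := by
      ext ω
      simp only [Set.mem_setOf_eq, Set.mem_preimage]
      rw [htel_ico i k hk ω, hτN]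
    rw [hset, ← Measure.map_apply (show Measurable (fun ω => W T ω i - W (τ k) ω i) from (hWm T i).sub (hWm (τ k) i))
        (show MeasurableSet {z:ℝ | 0 ≤ z} from measurableSet_Ici),
      hW.gauss_coord (τ k) T (hτmem k).1 (hτmem k).2 i]
    exact gauss_half_ge _
  have hhalfm : ∀ i : Fin d, ∀ k, k ≤ N →
      (1:ℝ≥0∞) / 2 ≤ P {ω | 0 ≤ ∑ j ∈ Finset.Ico k N, Ym i j ω} := by
    intro i k hk
    have hsum : ∀ ω, ∑ j ∈ Finset.Ico k N, Ym i j ω = -(∑ j ∈ Finset.Ico k N, Yp i j ω) := by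
      intro ω
      rw [← Finset.sum_neg_distrib]
    have hset : {ω | 0 ≤ ∑ j ∈ Finset.Ico k N, Ym i j ω}
        = (fun ω => W T ω i - W (τ k) ω i) ⁻¹' {z | z ≤ 0} := by
      ext ω
      simp only [Set.mem_setOf_eq, Set.mem_preimage]
      rw [hsum ω, htel_ico i k hk ω, hτN]
      constructor <;> intro h <;> linarith
    rw [hset, ← Measure.map_apply (show Measurable (fun ω => W T ω i - W (τ k) ω i) from (hWm T i).sub (hWm (τ k) i))
        (show MeasurableSet {z:ℝ | z ≤ 0} from measurableSet_Iic),
      hW.gauss_coord (τ k) T (hτmem k).1 (hτmem k).2 i]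
    exact gauss_half_le _
  set y : ℝ := x / d with hy
  set B : ℝ≥0∞ := ENNReal.ofReal (Real.exp (T*t^2/2 - t*y)) with hB
  have hTnn : ((Real.toNNReal (T - 0) : NNReal) : ℝ) = T := by
    rw [sub_zero, Real.coe_toNNReal _ hT.le]
  have hSp : ∀ i : Fin d, P {ω | ∃ k ≤ N, y ≤ ∑ j ∈ Finset.range k, Yp i j ω} ≤ 2 * B := by
    intro i
    refine (ottaviani N (Yp i) (hYpm i) (hindp i) (hhalfp i) y).trans ?_
    apply mul_le_mul_right
    have hset : {ω | y ≤ ∑ j ∈ Finset.range N, Yp i j ω}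
        = (fun ω => W T ω i - W 0 ω i) ⁻¹' {z | y ≤ z} := by
      ext ω
      simp only [Set.mem_setOf_eq, Set.mem_preimage]
      rw [htelp i N ω, hτN, hτ0]
    rw [hset, ← Measure.map_apply (show Measurable (fun ω => W T ω i - W 0 ω i) from (hWm T i).sub (hWm 0 i))
        (show MeasurableSet {z:ℝ | y ≤ z} from measurableSet_Ici),
      hW.gauss_coord 0 T le_rfl hT.le i]
    calc (gaussianReal 0 (Real.toNNReal (T - 0))) {z | y ≤ z}
        ≤ ENNReal.ofReal (Real.exp (((Real.toNNReal (T-0) : NNReal):ℝ) * t^2/2 - t*y)) :=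
          gauss_tail _ ht y
      _ = B := by rw [hTnn]
  have hSm : ∀ i : Fin d, P {ω | ∃ k ≤ N, y ≤ ∑ j ∈ Finset.range k, Ym i j ω} ≤ 2 * B := by
    intro i
    refine (ottaviani N (Ym i) (hYmm i) (hindm i) (hhalfm i) y).trans ?_
    apply mul_le_mul_right
    have hset : {ω | y ≤ ∑ j ∈ Finset.range N, Ym i j ω}
        = (fun ω => W T ω i - W 0 ω i) ⁻¹' {z | z ≤ -y} := by
      ext ω
      simp only [Set.mem_setOf_eq, Set.mem_preimage]
      rw [htelm i N ω, hτN, hτ0]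
      constructor <;> intro h <;> linarith
    rw [hset, ← Measure.map_apply (show Measurable (fun ω => W T ω i - W 0 ω i) from (hWm T i).sub (hWm 0 i))
        (show MeasurableSet {z:ℝ | z ≤ -y} from measurableSet_Iic),
      hW.gauss_coord 0 T le_rfl hT.le i]
    calc (gaussianReal 0 (Real.toNNReal (T - 0))) {z | z ≤ -y}
        ≤ ENNReal.ofReal (Real.exp (((Real.toNNReal (T-0) : NNReal):ℝ) * t^2/2 - t*y)) :=
          gauss_tail_le _ ht y
      _ = B := by rw [hTnn]
  have hsub : {ω | x < ⨆ k : Fin (2^n+1), ‖W (dyadPt T n (k:ℕ)) ω‖}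
      ≤ᵐ[P] ⋃ i : Fin d, ({ω | ∃ k ≤ N, y ≤ ∑ j ∈ Finset.range k, Yp i j ω}
        ∪ {ω | ∃ k ≤ N, y ≤ ∑ j ∈ Finset.range k, Ym i j ω}) := by
    filter_upwards [hW.init] with ω h0 hx1
    obtain ⟨k, hk⟩ := (lt_ciSup_iff (Set.Finite.bddAbove (Set.finite_range _))).mp hx1
    obtain ⟨i, hi⟩ := exists_coord hd (W (τ (k:ℕ)) ω)
    have hd0 : (0:ℝ) < d := by exact_mod_cast hd
    have hxd : y < |W (τ (k:ℕ)) ω i| := by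
      rw [hy, div_lt_iff₀ hd0]
      calc x < ‖W (τ (k:ℕ)) ω‖ := hk
        _ ≤ d * |W (τ (k:ℕ)) ω i| := hi
        _ = |W (τ (k:ℕ)) ω i| * d := mul_comm _ _
    have hzero : W (τ 0) ω i = 0 := by
      rw [hτ0, h0]
      rfl
    have hval : ∑ j ∈ Finset.range (k:ℕ), Yp i j ω = W (τ (k:ℕ)) ω i := by
      rw [htelp i (k:ℕ) ω, hzero, sub_zero]
    have hkN : (k:ℕ) ≤ N := Nat.lt_succ_iff.mp k.2
    show ω ∈ ⋃ i : Fin d, ({ω | ∃ k ≤ N, y ≤ ∑ j ∈ Finset.range k, Yp i j ω}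
        ∪ {ω | ∃ k ≤ N, y ≤ ∑ j ∈ Finset.range k, Ym i j ω})
    simp only [Set.mem_iUnion, Set.mem_union, Set.mem_setOf_eq]
    rcases le_or_gt 0 (W (τ (k:ℕ)) ω i) with hpos | hneg
    · refine ⟨i, Or.inl ⟨(k:ℕ), hkN, ?_⟩⟩
      rw [hval]
      rw [abs_of_nonneg hpos] at hxd
      linarith
    · refine ⟨i, Or.inr ⟨(k:ℕ), hkN, ?_⟩⟩
      have hvm : ∑ j ∈ Finset.range (k:ℕ), Ym i j ω = -(W (τ (k:ℕ)) ω i) := by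
        rw [htelm i (k:ℕ) ω, hzero, sub_zero]
      rw [hvm]
      rw [abs_of_neg hneg] at hxd
      linarith
  calc P {ω | x < ⨆ k : Fin (2^n+1), ‖W (dyadPt T n (k:ℕ)) ω‖}
      ≤ P (⋃ i : Fin d, ({ω | ∃ k ≤ N, y ≤ ∑ j ∈ Finset.range k, Yp i j ω}
          ∪ {ω | ∃ k ≤ N, y ≤ ∑ j ∈ Finset.range k, Ym i j ω})) := measure_mono_ae hsub
    _ ≤ ∑ i : Fin d, P ({ω | ∃ k ≤ N, y ≤ ∑ j ∈ Finset.range k, Yp i j ω}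
          ∪ {ω | ∃ k ≤ N, y ≤ ∑ j ∈ Finset.range k, Ym i j ω}) := measure_iUnion_fintype_le _ _
    _ ≤ ∑ i : Fin d, (P {ω | ∃ k ≤ N, y ≤ ∑ j ∈ Finset.range k, Yp i j ω}
          + P {ω | ∃ k ≤ N, y ≤ ∑ j ∈ Finset.range k, Ym i j ω}) :=
        Finset.sum_le_sum fun i _ => measure_union_le _ _
    _ ≤ ∑ _i : Fin d, (2*B + 2*B) := Finset.sum_le_sum fun i _ => add_le_add (hSp i) (hSm i)
    _ = (d:ℝ≥0∞) * (2*B + 2*B) := by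
        rw [Finset.sum_const, Finset.card_univ, Fintype.card_fin, nsmul_eq_mul]
    _ = (4*(d:ℝ≥0∞)) * B := by ring

/-- The running supremum `sup_{t∈[0,T]} ‖W_t‖^α` of a standard Brownian
motion is measurable and `E[exp(c · sup_{t∈[0,T]} ‖W_t‖^α)] < ∞` for every `c ≥ 0` and
`α ∈ [0,2)`. -/
theorem stmt_3 {Ω : Type} [MeasurableSpace Ω] (P : Measure Ω) [IsProbabilityMeasure P]
    (T c : ℝ) (hT : 0 ≤ T) (hc : 0 ≤ c) (α : ℝ) (hα0 : 0 ≤ α) (hα2 : α < 2)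
    (d : ℕ) (hd : 0 < d)
    (W : ℝ → Ω → EuclideanSpace ℝ (Fin d))
    (hW : IsStdBrownianMotion P W) :
    Measurable (fun ω => ⨆ t : Set.Icc (0:ℝ) T, ‖W (t:ℝ) ω‖ ^ α) ∧
      (∫⁻ ω, ENNReal.ofReal
          (Real.exp (c * ⨆ t : Set.Icc (0:ℝ) T, ‖W (t:ℝ) ω‖ ^ α)) ∂P) < ⊤ := by
  have hne : Nonempty (Set.Icc (0:ℝ) T) := ⟨⟨0, le_rfl, hT⟩⟩
  rcases eq_or_lt_of_le hα0 with hα | hα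
  · -- α = 0
    have hval : (fun ω => ⨆ t : Set.Icc (0:ℝ) T, ‖W (t:ℝ) ω‖ ^ α) = fun _ => (1:ℝ) := by
      funext ω
      rw [← hα]
      simp only [Real.rpow_zero]
      exact ciSup_const
    constructor
    · rw [hval]
      exact measurable_const
    · have heq : (fun ω => ENNReal.ofReal
          (Real.exp (c * ⨆ t : Set.Icc (0:ℝ) T, ‖W (t:ℝ) ω‖ ^ α)))
          = fun _ : Ω => ENNReal.ofReal (Real.exp c) := by
        funext ω
        rw [show (⨆ t : Set.Icc (0:ℝ) T, ‖W (t:ℝ) ω‖ ^ α) = 1 from congrFun hval ω, mul_one]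
      rw [heq, lintegral_const, measure_univ, mul_one]
      exact ENNReal.ofReal_lt_top
  · -- α > 0
    rcases eq_or_lt_of_le hT with hT0 | hT0
    · -- T = 0
      subst hT0
      have hval : ∀ ω, (⨆ t : Set.Icc (0:ℝ) 0, ‖W (t:ℝ) ω‖ ^ α) = ‖W 0 ω‖ ^ α := by
        intro ω
        have hconst : (fun t : Set.Icc (0:ℝ) 0 => ‖W (t:ℝ) ω‖ ^ α)
            = fun _ => ‖W 0 ω‖ ^ α := by
          funext t
          rw [show ((t:ℝ)) = 0 from le_antisymm t.2.2 t.2.1]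
        rw [show (⨆ t : Set.Icc (0:ℝ) 0, ‖W (t:ℝ) ω‖ ^ α)
          = ⨆ _t : Set.Icc (0:ℝ) 0, ‖W 0 ω‖ ^ α from by rw [hconst]]
        exact ciSup_const
      constructor
      · have heq : (fun ω => ⨆ t : Set.Icc (0:ℝ) 0, ‖W (t:ℝ) ω‖ ^ α)
            = fun ω => ‖W 0 ω‖ ^ α := funext hval
        rw [heq]
        exact (Real.continuous_rpow_const hα0).measurable.comp (hW.meas 0).norm
      · have hae : ∀ᵐ ω ∂P, ENNReal.ofReal
            (Real.exp (c * ⨆ t : Set.Icc (0:ℝ) 0, ‖W (t:ℝ) ω‖ ^ α)) = 1 := by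
          filter_upwards [hW.init] with ω h0
          rw [hval ω, h0]
          rw [norm_zero, Real.zero_rpow hα.ne', mul_zero, Real.exp_zero, ENNReal.ofReal_one]
        rw [lintegral_congr_ae hae, lintegral_one, measure_univ]
        exact ENNReal.one_lt_top
    · -- 0 < T, 0 < α
      have hcontw : ∀ ω, Continuous fun s : ℝ => ‖W s ω‖ := fun ω => (hW.cont ω).norm
      set F : Ω → ℝ := fun ω => ⨆ s : Set.Icc (0:ℝ) T, ‖W (s:ℝ) ω‖ with hF
      set G : ℕ → Ω → ℝ := fun n ω => ⨆ k : Fin (2^n+1), ‖W (dyadPt T n (k:ℕ)) ω‖ with hG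
      have hFG : ∀ ω, F ω = ⨆ n, G n ω := fun ω => dyad_sup hT0 (hcontw ω)
      have hGmeas : ∀ n, Measurable (G n) :=
        fun n => Measurable.iSup fun k => (hW.meas _).norm
      have hFmeas : Measurable F := by
        have heq : F = fun ω => ⨆ n, G n ω := funext hFG
        rw [heq]
        exact Measurable.iSup hGmeas
      have hbddt : ∀ ω, BddAbove (Set.range fun s : Set.Icc (0:ℝ) T => ‖W (s:ℝ) ω‖) := by
        intro ω
        obtain ⟨t₀, ht₀, hmax'⟩ := isCompact_Icc.exists_isMaxOn
          (⟨0, le_rfl, hT0.le⟩ : Set.Nonempty (Set.Icc (0:ℝ) T)) (hcontw ω).continuousOn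
        exact ⟨‖W t₀ ω‖, by rintro z ⟨s, rfl⟩; exact hmax' s.2⟩
      have hF0 : ∀ ω, 0 ≤ F ω := fun ω =>
        (norm_nonneg (W 0 ω)).trans (le_ciSup (hbddt ω) ⟨0, le_rfl, hT0.le⟩)
      have hGleF : ∀ n ω, G n ω ≤ F ω := by
        intro n ω
        apply ciSup_le
        intro k
        exact le_ciSup (hbddt ω) ⟨dyadPt T n k, dyadPt_mem hT0.le n k⟩
      have hbddG : ∀ ω, BddAbove (Set.range fun n => G n ω) :=
        fun ω => ⟨F ω, by rintro z ⟨n, rfl⟩; exact hGleF n ω⟩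
      have hsup_rpow : ∀ ω, (⨆ s : Set.Icc (0:ℝ) T, ‖W (s:ℝ) ω‖ ^ α) = F ω ^ α := by
        intro ω
        apply le_antisymm
        · apply ciSup_le
          intro s
          exact Real.rpow_le_rpow (norm_nonneg _) (le_ciSup (hbddt ω) s) hα0
        · obtain ⟨t₀, ht₀, hmax'⟩ := isCompact_Icc.exists_isMaxOn
            (⟨0, le_rfl, hT0.le⟩ : Set.Nonempty (Set.Icc (0:ℝ) T)) (hcontw ω).continuousOn
          have hFeq : F ω = ‖W t₀ ω‖ := le_antisymm (ciSup_le fun s => hmax' s.2)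
            (le_ciSup (hbddt ω) ⟨t₀, ht₀⟩)
          have hbdd2 : BddAbove (Set.range fun s : Set.Icc (0:ℝ) T => ‖W (s:ℝ) ω‖ ^ α) := by
            refine ⟨F ω ^ α, ?_⟩
            rintro z ⟨s, rfl⟩
            exact Real.rpow_le_rpow (norm_nonneg _) (le_ciSup (hbddt ω) s) hα0
          rw [hFeq]
          exact le_ciSup hbdd2 (⟨t₀, ht₀⟩ : Set.Icc (0:ℝ) T)
      have hd0 : (0:ℝ) < d := by exact_mod_cast hd
      constructor
      · have heq : (fun ω => ⨆ s : Set.Icc (0:ℝ) T, ‖W (s:ℝ) ω‖ ^ α)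
            = fun ω => F ω ^ α := funext hsup_rpow
        rw [heq]
        exact (Real.continuous_rpow_const hα0).measurable.comp hFmeas
      -- integral part
      set K : ℝ := 2*(d:ℝ)^2*T with hK
      have hKpos : 0 < K := by positivity
      have tailF : ∀ x : ℝ, 0 ≤ x →
          P {ω | x < F ω} ≤ ENNReal.ofReal ((4*(d:ℝ)) * Real.exp (-x^2/K)) := by
        intro x hx
        set t : ℝ := x / ((d:ℝ)*T) with htdef
        have ht : 0 ≤ t := by positivity
        have hxp : Real.exp (T*t^2/2 - t*(x/d)) = Real.exp (-x^2/K) := by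
          congr 1
          rw [htdef, hK]
          field_simp
          ring
        have hsetF : {ω | x < F ω} = ⋃ n, {ω | x < G n ω} := by
          ext ω
          simp only [Set.mem_setOf_eq, Set.mem_iUnion]
          rw [hFG ω]
          exact lt_ciSup_iff (hbddG ω)
        have hmonoset : Monotone fun n => {ω | x < G n ω} := by
          intro a b hab ω hω
          exact lt_of_lt_of_le hω (dyadSup_mono hT0.le (fun s => ‖W s ω‖) hab)
        rw [hsetF, Directed.measure_iUnion hmonoset.directed_le]
        apply iSup_le
        intro n
        calc P {ω | x < G n ω}
            ≤ (4*(d:ℝ≥0∞)) * ENNReal.ofReal (Real.exp (T*t^2/2 - t*(x/d))) :=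
              bm_tail P hd hT0 W hW n x ht
          _ = ENNReal.ofReal ((4*(d:ℝ)) * Real.exp (-x^2/K)) := by
              rw [hxp, ENNReal.ofReal_mul (by positivity : (0:ℝ) ≤ 4*(d:ℝ)),
                ENNReal.ofReal_mul (by norm_num : (0:ℝ) ≤ 4), ENNReal.ofReal_ofNat,
                ENNReal.ofReal_natCast]
      obtain ⟨C, hC0, hC⟩ := young_ineq hc hα0 hα2 hKpos
      have hsplit : ∀ ω, ENNReal.ofReal (Real.exp (c * F ω ^ α))
          ≤ ENNReal.ofReal (Real.exp C) * ENNReal.ofReal (Real.exp (F ω^2/(2*K))) := by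
        intro ω
        rw [← ENNReal.ofReal_mul (Real.exp_nonneg _), ← Real.exp_add]
        apply ENNReal.ofReal_le_ofReal
        apply Real.exp_le_exp.mpr
        have := hC (F ω) (hF0 ω)
        linarith
      have hintmeas : Measurable fun ω => ENNReal.ofReal (Real.exp (F ω^2/(2*K))) := by
        apply ENNReal.measurable_ofReal.comp
        exact Real.measurable_exp.comp ((hFmeas.pow_const 2).div_const (2*K))
      set r : ℝ := Real.exp (-1/(2*K)) with hr
      have hr0 : (0:ℝ) ≤ r := Real.exp_nonneg _
      have hr1 : r < 1 := by
        rw [hr, Real.exp_lt_one_iff]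
        have : (0:ℝ) < 2*K := by positivity
        rw [neg_div]
        simp only [neg_neg, Left.neg_neg_iff]
        positivity
      set D : ℝ := 4*(d:ℝ) + Real.exp (71/(2*K)) with hD
      have hsets : ∀ m : ℕ, MeasurableSet {ω | (m:ℝ) ≤ F ω} :=
        fun m => measurableSet_le measurable_const hFmeas
      have hterm : ∀ m : ℕ,
          ENNReal.ofReal (Real.exp (((m:ℝ)+1)^2/(2*K))) * P {ω | (m:ℝ) ≤ F ω}
            ≤ ENNReal.ofReal (D * r^m) := by
        intro m
        have hrm : r^m = Real.exp (-(m:ℝ)/(2*K)) := by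
          rw [hr, ← Real.exp_nat_mul]
          congr 1
          field_simp
        have h4d : (0:ℝ) ≤ 4*(d:ℝ) := by positivity
        rcases le_or_gt 7 m with hm7 | hm7
        · have hmR : (7:ℝ) ≤ (m:ℝ) := by exact_mod_cast hm7
          have hm1 : (0:ℝ) ≤ (m:ℝ) - 1 := by linarith
          have hsub : {ω | (m:ℝ) ≤ F ω} ⊆ {ω | (m:ℝ)-1 < F ω} := by
            intro ω hω
            have h1 : (m:ℝ) - 1 < (m:ℝ) := by linarith
            exact lt_of_lt_of_le h1 hω
          have htail := tailF ((m:ℝ)-1) hm1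
          calc ENNReal.ofReal (Real.exp (((m:ℝ)+1)^2/(2*K))) * P {ω | (m:ℝ) ≤ F ω}
              ≤ ENNReal.ofReal (Real.exp (((m:ℝ)+1)^2/(2*K)))
                * ENNReal.ofReal ((4*(d:ℝ)) * Real.exp (-((m:ℝ)-1)^2/K)) :=
                mul_le_mul_right ((measure_mono hsub).trans htail) _
            _ = ENNReal.ofReal (Real.exp (((m:ℝ)+1)^2/(2*K))
                * ((4*(d:ℝ)) * Real.exp (-((m:ℝ)-1)^2/K))) :=
                (ENNReal.ofReal_mul (Real.exp_nonneg _)).symm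
            _ ≤ ENNReal.ofReal (D * r^m) := by
                apply ENNReal.ofReal_le_ofReal
                rw [hrm]
                have h1 : ((m:ℝ)+1)^2/(2*K) + (-((m:ℝ)-1)^2/K) ≤ -(m:ℝ)/(2*K) := by
                  have h2 : (-((m:ℝ)-1)^2/K) = (-2*((m:ℝ)-1)^2)/(2*K) := by
                    field_simp
                  have hm0 : (0:ℝ) ≤ (m:ℝ) := Nat.cast_nonneg m
                  have hnum : ((m:ℝ)+1)^2 + (-2*((m:ℝ)-1)^2) ≤ -(m:ℝ) := by
                    nlinarith [mul_nonneg (by linarith : (0:ℝ) ≤ (m:ℝ)-7) hm0]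
                  rw [h2, ← add_div]
                  exact (div_le_div_iff_of_pos_right (by positivity)).mpr hnum
                calc Real.exp (((m:ℝ)+1)^2/(2*K)) * ((4*(d:ℝ)) * Real.exp (-((m:ℝ)-1)^2/K))
                    = (4*(d:ℝ)) * Real.exp (((m:ℝ)+1)^2/(2*K) + (-((m:ℝ)-1)^2/K)) := by
                      rw [Real.exp_add]
                      ring
                  _ ≤ (4*(d:ℝ)) * Real.exp (-(m:ℝ)/(2*K)) :=
                      mul_le_mul_of_nonneg_left (Real.exp_le_exp.mpr h1) h4d
                  _ ≤ D * Real.exp (-(m:ℝ)/(2*K)) := by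
                      apply mul_le_mul_of_nonneg_right _ (Real.exp_nonneg _)
                      have := Real.exp_pos (71/(2*K))
                      rw [hD]
                      linarith
        · have hmR : (m:ℝ) ≤ 6 := by exact_mod_cast Nat.lt_succ_iff.mp hm7
          have hm0 : (0:ℝ) ≤ (m:ℝ) := Nat.cast_nonneg m
          calc ENNReal.ofReal (Real.exp (((m:ℝ)+1)^2/(2*K))) * P {ω | (m:ℝ) ≤ F ω}
              ≤ ENNReal.ofReal (Real.exp (((m:ℝ)+1)^2/(2*K))) * 1 := by
                apply mul_le_mul_right
                exact (measure_mono (Set.subset_univ _)).trans_eq measure_univ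
            _ = ENNReal.ofReal (Real.exp (((m:ℝ)+1)^2/(2*K))) := mul_one _
            _ ≤ ENNReal.ofReal (D * r^m) := by
                apply ENNReal.ofReal_le_ofReal
                rw [hrm]
                have hkey : Real.exp (((m:ℝ)+1)^2/(2*K))
                    = Real.exp ((((m:ℝ)+1)^2 + (m:ℝ))/(2*K)) * Real.exp (-(m:ℝ)/(2*K)) := by
                  rw [← Real.exp_add, ← add_div]
                  congr 1
                  ring
                rw [hkey]
                have h71 : (((m:ℝ)+1)^2 + (m:ℝ))/(2*K) ≤ 71/(2*K) :=
                  (div_le_div_iff_of_pos_right (by positivity)).mpr (by nlinarith)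
                calc Real.exp ((((m:ℝ)+1)^2 + (m:ℝ))/(2*K)) * Real.exp (-(m:ℝ)/(2*K))
                    ≤ Real.exp (71/(2*K)) * Real.exp (-(m:ℝ)/(2*K)) :=
                      mul_le_mul_of_nonneg_right (Real.exp_le_exp.mpr h71) (Real.exp_nonneg _)
                  _ ≤ D * Real.exp (-(m:ℝ)/(2*K)) := by
                      apply mul_le_mul_of_nonneg_right _ (Real.exp_nonneg _)
                      rw [hD]
                      linarith
      have hpt : ∀ ω, ENNReal.ofReal (Real.exp (F ω^2/(2*K)))
          ≤ ∑' m : ℕ, ENNReal.ofReal (Real.exp (((m:ℝ)+1)^2/(2*K)))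
              * Set.indicator {ω' | (m:ℝ) ≤ F ω'} (1 : Ω → ℝ≥0∞) ω := by
        intro ω
        have hmem : ω ∈ {ω' | ((⌊F ω⌋₊:ℕ):ℝ) ≤ F ω'} := Nat.floor_le (hF0 ω)
        have hFlt : F ω ≤ ((⌊F ω⌋₊:ℕ):ℝ) + 1 := (Nat.lt_floor_add_one (F ω)).le
        calc ENNReal.ofReal (Real.exp (F ω^2/(2*K)))
            ≤ ENNReal.ofReal (Real.exp ((((⌊F ω⌋₊:ℕ):ℝ)+1)^2/(2*K))) := by
              apply ENNReal.ofReal_le_ofReal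
              apply Real.exp_le_exp.mpr
              have hsq : F ω^2 ≤ (((⌊F ω⌋₊:ℕ):ℝ)+1)^2 := by nlinarith [hF0 ω, hFlt]
              exact (div_le_div_iff_of_pos_right (by positivity)).mpr hsq
          _ = ENNReal.ofReal (Real.exp ((((⌊F ω⌋₊:ℕ):ℝ)+1)^2/(2*K)))
              * Set.indicator {ω' | ((⌊F ω⌋₊:ℕ):ℝ) ≤ F ω'} (1 : Ω → ℝ≥0∞) ω := by
              rw [Set.indicator_of_mem hmem, Pi.one_apply, mul_one]
          _ ≤ _ := ENNReal.le_tsum ⌊F ω⌋₊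
      have hintegral2 : ∫⁻ ω, ENNReal.ofReal (Real.exp (F ω^2/(2*K))) ∂P
          ≤ ∑' m : ℕ, ENNReal.ofReal (D * r^m) := by
        calc ∫⁻ ω, ENNReal.ofReal (Real.exp (F ω^2/(2*K))) ∂P
            ≤ ∫⁻ ω, ∑' m : ℕ, ENNReal.ofReal (Real.exp (((m:ℝ)+1)^2/(2*K)))
                * Set.indicator {ω' | (m:ℝ) ≤ F ω'} (1 : Ω → ℝ≥0∞) ω ∂P :=
              lintegral_mono hpt
          _ = ∑' m : ℕ, ∫⁻ ω, ENNReal.ofReal (Real.exp (((m:ℝ)+1)^2/(2*K)))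
                * Set.indicator {ω' | (m:ℝ) ≤ F ω'} (1 : Ω → ℝ≥0∞) ω ∂P :=
              lintegral_tsum fun m =>
                (((measurable_one.indicator (hsets m)).const_mul _)).aemeasurable
          _ = ∑' m : ℕ, ENNReal.ofReal (Real.exp (((m:ℝ)+1)^2/(2*K))) * P {ω | (m:ℝ) ≤ F ω} := by
              congr 1
              funext m
              rw [lintegral_const_mul _ (measurable_one.indicator (hsets m)),
                lintegral_indicator_one (hsets m)]
          _ ≤ ∑' m : ℕ, ENNReal.ofReal (D * r^m) := ENNReal.tsum_le_tsum hterm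
      have hsummable : Summable (fun m : ℕ => D * r^m) :=
        (summable_geometric_of_lt_one hr0 hr1).mul_left D
      have hDnn : ∀ m : ℕ, 0 ≤ D * r^m := by
        intro m
        have := Real.exp_pos (71/(2*K))
        have h4d : (0:ℝ) ≤ 4*(d:ℝ) := by positivity
        have hD0 : 0 ≤ D := by rw [hD]; linarith
        positivity
      have hfin : (∑' m : ℕ, ENNReal.ofReal (D * r^m)) < ⊤ := by
        rw [← ENNReal.ofReal_tsum_of_nonneg hDnn hsummable]
        exact ENNReal.ofReal_lt_top
      have hgoal_fun : (fun ω => ENNReal.ofReal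
          (Real.exp (c * ⨆ s : Set.Icc (0:ℝ) T, ‖W (s:ℝ) ω‖ ^ α)))
          = fun ω => ENNReal.ofReal (Real.exp (c * F ω ^ α)) := by
        funext ω
        rw [hsup_rpow ω]
      rw [hgoal_fun]
      calc ∫⁻ ω, ENNReal.ofReal (Real.exp (c * F ω ^ α)) ∂P
          ≤ ∫⁻ ω, ENNReal.ofReal (Real.exp C) * ENNReal.ofReal (Real.exp (F ω^2/(2*K))) ∂P :=
            lintegral_mono hsplit
        _ = ENNReal.ofReal (Real.exp C) * ∫⁻ ω, ENNReal.ofReal (Real.exp (F ω^2/(2*K))) ∂P :=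
            lintegral_const_mul _ hintmeas
        _ ≤ ENNReal.ofReal (Real.exp C) * ∑' m : ℕ, ENNReal.ofReal (D * r^m) :=
            mul_le_mul_right hintegral2 _
        _ < ⊤ := ENNReal.mul_lt_top ENNReal.ofReal_lt_top hfin

end
end
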